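/- For the discrete gradient descent iterates X_{n+1} = X_n - Δt∇Ψ(X_n) with 0 < Δt ≤ 1/L and initial energy Ψ(X₀) = E₀ < E_m, every iterate satisfies min_{i≠j} ‖X_nⁱ - X_nʲ‖ ≥ m for all n ≥ 0 (discrete-time collision avoidance). -/

import Mathlib

/-!
With a step `Δt ≤ 1 / L`, the descent lemma for an `L`-Lipschitz gradient gives
`Ψ (X (n + 1)) ≤ Ψ (X n) - Δt / 2 * ‖∇Ψ (X n)‖ ^ 2`, so the energy never exceeds `E₀ < E_m`;
a configuration with two particles closer than `m` would have energy at least `E_m`.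
-/

open Set InnerProductSpace

section

variable {F : Type*} [NormedAddCommGroup F] [InnerProductSpace ℝ F] [CompleteSpace F]
  {Ψ : F → ℝ}

theorem hasDerivAt_apply_add_smul (hΨ : Differentiable ℝ Ψ) (x v : F) (t : ℝ) :
    HasDerivAt (fun s : ℝ => Ψ (x + s • v)) ⟪gradient Ψ (x + t • v), v⟫_ℝ t := by
  have hline : HasDerivAt (fun s : ℝ => x + s • v) v t := by
    simpa using ((hasDerivAt_id t).smul_const v).const_add x
  refine ((hΨ _).hasGradientAt.hasFDerivAt.comp_hasDerivAt t hline).congr_deriv ?_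
  simp

theorem apply_add_le_of_gradient_lipschitz (hΨ : Differentiable ℝ Ψ) {L : ℝ}
    (hlip : ∀ x y, ‖gradient Ψ x - gradient Ψ y‖ ≤ L * ‖x - y‖) (x v : F) :
    Ψ (x + v) ≤ Ψ x + ⟪gradient Ψ x, v⟫_ℝ + L / 2 * ‖v‖ ^ 2 := by
  set g : ℝ → ℝ := fun t => Ψ (x + t • v) - t * ⟪gradient Ψ x, v⟫_ℝ - L / 2 * t ^ 2 * ‖v‖ ^ 2
  have hg : ∀ t, HasDerivAt g
      (⟪gradient Ψ (x + t • v) - gradient Ψ x, v⟫_ℝ - L * t * ‖v‖ ^ 2) t := by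
    intro t
    have := ((hasDerivAt_apply_add_smul hΨ x v t).sub ((hasDerivAt_id t).mul_const
      ⟪gradient Ψ x, v⟫_ℝ)).sub (((hasDerivAt_pow 2 t).const_mul (L / 2)).mul_const (‖v‖ ^ 2))
    refine this.congr_deriv ?_
    rw [inner_sub_left]
    push_cast
    ring
  have hg' : ∀ t ∈ interior (Ici (0 : ℝ)),
      ⟪gradient Ψ (x + t • v) - gradient Ψ x, v⟫_ℝ - L * t * ‖v‖ ^ 2 ≤ 0 := by
    intro t ht
    rw [interior_Ici] at ht
    rw [sub_nonpos]
    calc ⟪gradient Ψ (x + t • v) - gradient Ψ x, v⟫_ℝ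
        ≤ ‖gradient Ψ (x + t • v) - gradient Ψ x‖ * ‖v‖ := real_inner_le_norm _ _
      _ ≤ L * ‖t • v‖ * ‖v‖ := by
          gcongr
          simpa using hlip (x + t • v) x
      _ = L * t * ‖v‖ ^ 2 := by rw [norm_smul, Real.norm_of_nonneg ht.le]; ring
  have hanti : AntitoneOn g (Ici 0) :=
    antitoneOn_of_hasDerivWithinAt_nonpos (convex_Ici 0)
      (fun t _ => (hg t).continuousAt.continuousWithinAt)
      (fun t _ => (hg t).hasDerivWithinAt) hg'
  have hg01 := hanti self_mem_Ici (mem_Ici.2 zero_le_one) zero_le_one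
  simp only [g, one_smul, zero_smul, add_zero] at hg01
  linarith

theorem apply_sub_smul_gradient_le (hΨ : Differentiable ℝ Ψ) {L : ℝ}
    (hlip : ∀ x y, ‖gradient Ψ x - gradient Ψ y‖ ≤ L * ‖x - y‖) {Δt : ℝ} (hΔt : 0 ≤ Δt)
    (hLΔt : L * Δt ≤ 1) (x : F) :
    Ψ (x - Δt • gradient Ψ x) ≤ Ψ x - Δt / 2 * ‖gradient Ψ x‖ ^ 2 := by
  have h := apply_add_le_of_gradient_lipschitz hΨ hlip x (-(Δt • gradient Ψ x))
  rw [← sub_eq_add_neg, inner_neg_right, real_inner_smul_right, real_inner_self_eq_norm_sq,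
    norm_neg, norm_smul, Real.norm_of_nonneg hΔt] at h
  nlinarith [mul_le_mul_of_nonneg_right hLΔt (mul_nonneg hΔt (sq_nonneg ‖gradient Ψ x‖))]

theorem antitone_comp_of_gradient_step (hΨ : Differentiable ℝ Ψ) {L : ℝ}
    (hlip : ∀ x y, ‖gradient Ψ x - gradient Ψ y‖ ≤ L * ‖x - y‖) {Δt : ℝ} (hΔt : 0 ≤ Δt)
    (hLΔt : L * Δt ≤ 1) {X : ℕ → F} (hX : ∀ n, X (n + 1) = X n - Δt • gradient Ψ (X n)) :
    Antitone (Ψ ∘ X) :=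
  antitone_nat_of_succ_le fun n => by
    have hstep := apply_sub_smul_gradient_le hΨ hlip hΔt hLΔt (X n)
    have hmonoease : 0 ≤ Δt / 2 * ‖gradient Ψ (X n)‖ ^ 2 := by positivity
    rw [Function.comp_apply, Function.comp_apply, hX n]
    linarith

end

theorem stmt_5_general {N : ℕ}
    (Ψ : PiLp 2 (fun _ : Fin N => EuclideanSpace ℝ (Fin 2)) → ℝ)
    (hΨ : ∀ x, HasGradientAt Ψ (gradient Ψ x) x)
    (L : ℝ)
    (hlip : ∀ x y, ‖gradient Ψ x - gradient Ψ y‖ ≤ L * ‖x - y‖)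
    (m Em : ℝ)
    (hpen : ∀ Y : PiLp 2 (fun _ : Fin N => EuclideanSpace ℝ (Fin 2)),
      (∃ i j, i ≠ j ∧ ‖Y i - Y j‖ < m) → Em ≤ Ψ Y)
    (Δt : ℝ) (hΔt : 0 < Δt) (hΔt' : Δt ≤ 1 / L)
    (X : ℕ → PiLp 2 (fun _ : Fin N => EuclideanSpace ℝ (Fin 2)))
    (hX : ∀ n, X (n + 1) = X n - Δt • gradient Ψ (X n))
    (hE0 : Ψ (X 0) < Em) :
    ∀ n : ℕ, ∀ i j : Fin N, i ≠ j → m ≤ ‖X n i - X n j‖ := by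
  have hL : 0 < L := one_div_pos.mp (hΔt.trans_le hΔt')
  have hLΔt : L * Δt ≤ 1 := (le_div_iff₀' hL).mp hΔt'
  have hmono := antitone_comp_of_gradient_step (fun x => (hΨ x).differentiableAt) hlip
    hΔt.le hLΔt hX
  intro n i j hij
  by_contra! hclose
  have hlow : Ψ (X n) < Em := (hmono (Nat.zero_le n)).trans_lt hE0
  exact hlow.not_ge (hpen (X n) ⟨i, j, hij, hclose⟩)

theorem stmt_5 {N : ℕ}
    (Ψ : PiLp 2 (fun _ : Fin N => EuclideanSpace ℝ (Fin 2)) → ℝ)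
    (hΨ : ∀ x, HasGradientAt Ψ (gradient Ψ x) x)
    (L : ℝ) (hL : 0 < L)
    (hlip : ∀ x y, ‖gradient Ψ x - gradient Ψ y‖ ≤ L * ‖x - y‖)
    (m Em : ℝ) (hm : 0 < m)
    (hpen : ∀ Y : PiLp 2 (fun _ : Fin N => EuclideanSpace ℝ (Fin 2)),
      (∃ i j, i ≠ j ∧ ‖Y i - Y j‖ < m) → Em ≤ Ψ Y)
    (Δt : ℝ) (hΔt : 0 < Δt) (hΔt' : Δt ≤ 1 / L)
    (X : ℕ → PiLp 2 (fun _ : Fin N => EuclideanSpace ℝ (Fin 2)))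
    (hX : ∀ n, X (n + 1) = X n - Δt • gradient Ψ (X n))
    (hE0 : Ψ (X 0) < Em) :
    ∀ n : ℕ, ∀ i j : Fin N, i ≠ j → m ≤ ‖X n i - X n j‖ :=
  stmt_5_general Ψ hΨ L hlip m Em hpen Δt hΔt hΔt' X hX hE0
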